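/- Let α = {A_1^{μ_1}, …, A_s^{μ_s}} be an element of Π̂_n^k with α ≠ 1̂, and set μ(α) := μ_1 + ⋯ + μ_s. Then: (1) the closed interval [α, 1̂] in Π̂_n^k is isomorphic as a poset to Π̂_s^k; (2) for every ν ∈ wcomp_{n−1} with supp(ν) ⊆ [k] such that ν − μ(α) is a weak composition lying in wcomp_{s−1}, the interval [α, [n]^ν] is isomorphic to the interval [0̂, [s]^{ν−μ(α)}] in Π_s^k; (3) the interval [0̂, α] is isomorphic to the direct product of posets [0̂, [|A_1|]^{μ_1}] × ⋯ × [0̂, [|A_s|]^{μ_s}], where [0̂, [|A_i|]^{μ_i}] is a maximal interval of Π_{|A_i|}^k. -/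

import Mathlib

/-! Weighted partition poset Π_n^k (raw representation).
Elements of [n] are represented by `Fin n` (the element j+1 ↔ index j) and
colors 1,…,k are represented by `Fin k` (color i+1 ↔ index i). -/

abbrev WP (n k : ℕ) := Finset (Finset (Fin n) × (Fin k → ℕ))

namespace WP

variable {n k : ℕ}

/-- total weight `|μ|` of a weight vector supported in `[k]`. -/
def wsum (w : Fin k → ℕ) : ℕ := ∑ i, w i

/-- the raw finset is a genuine weighted partition of `[n]`. -/
def IsWP (π : WP n k) : Prop :=
  (∀ p ∈ π, p.1.Nonempty) ∧
  (∀ p ∈ π, ∀ q ∈ π, p ≠ q → Disjoint p.1 q.1) ∧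
  (∀ x : Fin n, ∃ p ∈ π, x ∈ p.1) ∧
  (∀ p ∈ π, wsum p.2 + 1 = p.1.card)

/-- the order relation of `Π_n^k`. -/
def le (π ρ : WP n k) : Prop :=
  IsWP π ∧ IsWP ρ ∧
  (∀ p ∈ π, ∃ q ∈ ρ, p.1 ⊆ q.1) ∧
  (∀ q ∈ ρ,
    (∀ i, (∑ p ∈ π.filter (fun p => p.1 ⊆ q.1), p.2 i) ≤ q.2 i) ∧
    (∑ i, (q.2 i - ∑ p ∈ π.filter (fun p => p.1 ⊆ q.1), p.2 i))
      = (π.filter (fun p => p.1 ⊆ q.1)).card - 1)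

def lt (π ρ : WP n k) : Prop := le π ρ ∧ π ≠ ρ

/-- the minimum element `0̂` of `Π_n^k`. -/
def bot (n k : ℕ) : WP n k := Finset.univ.image (fun x => ({x}, fun _ => 0))

/-- the maximal element `[n]^μ` of `Π_n^k`. -/
def top (n k : ℕ) (f : Fin k → ℕ) : WP n k := {(Finset.univ, f)}

-- `mobiusAux r m` iterates the defining recursion of the Möbius function of the
-- relation `r`, `m` times.  For `m` at least the length of the interval `[a,b]` this
-- computes the Möbius function `μ̄(a,b)` of the poset.
open Classical in
noncomputable def mobiusAux {Q : Type*} (r : Q → Q → Prop) : ℕ → Q → Q → ℤ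
  | 0, a, b => if a = b then 1 else 0
  | m+1, a, b => if a = b then 1 else - ∑ᶠ c ∈ {c | r a c ∧ r c b ∧ c ≠ b}, mobiusAux r m a c

/-- the Möbius function `μ̄_{Π_n^k}` (intervals of `Π_n^k` have length at most `n`). -/
noncomputable def mobius (a b : WP n k) : ℤ := mobiusAux le n a b

end WP

namespace WP

/-- the total weight `μ(α) = μ₁ + ⋯ + μ_s` of a weighted partition. -/
def wtot {n k : ℕ} (α : WP n k) : Fin k → ℕ := fun i => ∑ p ∈ α, p.2 i

end WP

/-- `Π̂_n^k`: the poset `Π_n^k` with a maximum element `1̂` (= `none`) adjoined. -/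
def hatLE {n k : ℕ} (x y : Option (WP n k)) : Prop :=
  match x, y with
  | some a, some b => WP.le a b
  | _, none => True
  | none, some _ => False

/-- membership in `Π̂_n^k` -/
def IsWPHat {n k : ℕ} (x : Option (WP n k)) : Prop :=
  match x with
  | none => True
  | some a => WP.IsWP a

/-!
Above `α`, a weighted partition is determined by how it merges the blocks of `α`. Contracting
each block of `α` to a point, and removing from every block weight the weights of the blocks of
`α` it contains, identifies the partitions `β ≥ α` with the weighted partitions of the `s` blocks
of `α`; the weight condition `ν ≥ μ, |ν - μ| = l - 1` of the order is invariant under this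
subtraction, so the identification is an order isomorphism. This gives (1), and (2) follows since
`[n]^ν` contracts to `[s]^{ν - μ(α)}`. Below `α`, a partition is determined by its restrictions to
the blocks of `α`, and the order is checked block by block, which gives the product (3).
-/

namespace Finset

variable {X : Type*}

noncomputable def embOfFin (T : Finset X) : Fin T.card ↪ X :=
  T.equivFin.symm.toEmbedding.trans (Function.Embedding.subtype _)

theorem embOfFin_mem (T : Finset X) (j : Fin T.card) : T.embOfFin j ∈ T := (T.equivFin.symm j).2

theorem exists_embOfFin_eq {T : Finset X} {x : X} (hx : x ∈ T) : ∃ j, T.embOfFin j = x :=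
  ⟨T.equivFin ⟨x, hx⟩, by simp [embOfFin]⟩

theorem map_embOfFin_univ (T : Finset X) : univ.map T.embOfFin = T := by
  ext x
  simp only [mem_map, mem_univ, true_and]
  exact ⟨fun ⟨j, hj⟩ => hj ▸ T.embOfFin_mem j, exists_embOfFin_eq⟩

theorem map_embOfFin_subset (T : Finset X) (c : Finset (Fin T.card)) : c.map T.embOfFin ⊆ T := by
  intro x hx
  obtain ⟨j, -, rfl⟩ := mem_map.mp hx
  exact T.embOfFin_mem j

end Finset

theorem exists_relEquiv_subtype_and {A B : Type*} {p P : A → Prop} {q Q : B → Prop}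
    {r : A → A → Prop} {s : B → B → Prop} (e : {a // p a} ≃ {b // q b})
    (he : ∀ x y, r x.1 y.1 ↔ s (e x).1 (e y).1) (hPQ : ∀ x, P x.1 ↔ Q (e x).1) :
    ∃ e' : {a // p a ∧ P a} ≃ {b // q b ∧ Q b}, ∀ x y, r x.1 y.1 ↔ s (e' x).1 (e' y).1 :=
  ⟨(Equiv.subtypeSubtypeEquivSubtypeInter p P).symm.trans
      ((e.subtypeEquiv hPQ).trans (Equiv.subtypeSubtypeEquivSubtypeInter q Q)),
    fun x y => he ⟨x.1, x.2.1⟩ ⟨y.1, y.2.1⟩⟩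

namespace WP

variable {n k : ℕ}

def blocksIn (π : WP n k) (S : Finset (Fin n)) : WP n k := π.filter (fun p => p.1 ⊆ S)

def Refines (π ρ : WP n k) : Prop := ∀ p ∈ π, ∃ q ∈ ρ, p.1 ⊆ q.1

/-- Merging `l` blocks of total weight `μ` into a block of weight `ν` is allowed in `Π_n^k`
iff `ν ≥ μ` and `|ν - μ| = l - 1`. -/
def IsMergeWeight (ν μ : Fin k → ℕ) (l : ℕ) : Prop := μ ≤ ν ∧ wsum (ν - μ) = l - 1

def IsMergeBlock (π : WP n k) (q : Finset (Fin n) × (Fin k → ℕ)) : Prop :=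
  IsMergeWeight q.2 (wtot (blocksIn π q.1)) (blocksIn π q.1).card

theorem le_iff {π ρ : WP n k} :
    le π ρ ↔ IsWP π ∧ IsWP ρ ∧ Refines π ρ ∧ ∀ q ∈ ρ, IsMergeBlock π q :=
  Iff.rfl

section Basic

variable {π ρ : WP n k} {p q : Finset (Fin n) × (Fin k → ℕ)}

theorem IsWP.nonempty (h : IsWP π) (hp : p ∈ π) : p.1.Nonempty := h.1 p hp

theorem IsWP.disjoint (h : IsWP π) (hp : p ∈ π) (hq : q ∈ π) (hpq : p ≠ q) :
    Disjoint p.1 q.1 :=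
  h.2.1 p hp q hq hpq

theorem IsWP.exists_mem (h : IsWP π) (x : Fin n) : ∃ p ∈ π, x ∈ p.1 := h.2.2.1 x

theorem IsWP.wsum_add_one (h : IsWP π) (hp : p ∈ π) : wsum p.2 + 1 = p.1.card := h.2.2.2 p hp

theorem IsWP.eq_of_mem_of_mem (h : IsWP π) (hp : p ∈ π) (hq : q ∈ π) {x : Fin n}
    (hxp : x ∈ p.1) (hxq : x ∈ q.1) : p = q := by
  by_contra hpq
  exact Finset.disjoint_left.mp (h.disjoint hp hq hpq) hxp hxq

theorem Refines.subset_of_mem (h : Refines π ρ) (hρ : IsWP ρ) (hp : p ∈ π) (hq : q ∈ ρ)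
    {x : Fin n} (hxp : x ∈ p.1) (hxq : x ∈ q.1) : p.1 ⊆ q.1 := by
  obtain ⟨q', hq', hpq'⟩ := h p hp
  rwa [hρ.eq_of_mem_of_mem hq' hq (hpq' hxp) hxq] at hpq'

theorem le.isWP_left (h : le π ρ) : IsWP π := h.1

theorem le.isWP_right (h : le π ρ) : IsWP ρ := h.2.1

theorem le.refines (h : le π ρ) : Refines π ρ := h.2.2.1

theorem le.isMergeBlock (h : le π ρ) (hq : q ∈ ρ) : IsMergeBlock π q := h.2.2.2 q hq

theorem blocksIn_nonempty_of_le (h : le π ρ) (hq : q ∈ ρ) : (blocksIn π q.1).Nonempty := by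
  obtain ⟨x, hx⟩ := h.isWP_right.nonempty hq
  obtain ⟨p, hp, hxp⟩ := h.isWP_left.exists_mem x
  exact ⟨p, Finset.mem_filter.mpr ⟨hp, h.refines.subset_of_mem h.isWP_right hp hq hxp hx⟩⟩

theorem wtot_eq_sum (π : WP n k) : wtot π = ∑ p ∈ π, p.2 :=
  funext fun i => (Finset.sum_apply i π _).symm

theorem wsum_add (ν μ : Fin k → ℕ) : wsum (ν + μ) = wsum ν + wsum μ := Finset.sum_add_distrib

theorem wsum_wtot (π : WP n k) : wsum (wtot π) = ∑ p ∈ π, wsum p.2 := Finset.sum_comm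

theorem isMergeWeight_tsub_iff {ν μ a : Fin k → ℕ} {l : ℕ} (haν : a ≤ ν) (haμ : a ≤ μ) :
    IsMergeWeight (ν - a) (μ - a) l ↔ IsMergeWeight ν μ l := by
  have hsub : ν - a - (μ - a) = ν - μ := funext fun i => Nat.sub_sub_sub_cancel_right (haμ i)
  rw [IsMergeWeight, IsMergeWeight, hsub, tsub_le_tsub_iff_right haν]

theorem card_biUnion_fst {π t : WP n k} (hπ : IsWP π) (ht : t ⊆ π) :
    (t.biUnion Prod.fst).card = wsum (wtot t) + t.card := by
  rw [Finset.card_biUnion fun p hp q hq hpq => hπ.disjoint (ht hp) (ht hq) hpq, wsum_wtot,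
    Finset.card_eq_sum_ones, ← Finset.sum_add_distrib]
  exact Finset.sum_congr rfl fun p hp => (hπ.wsum_add_one (ht hp)).symm

end Basic

section BotTop

variable {z : WP n k}

theorem blocksIn_univ (π : WP n k) : blocksIn π Finset.univ = π :=
  Finset.filter_true_of_mem fun p _ => Finset.subset_univ p.1

theorem mem_bot {p : Finset (Fin n) × (Fin k → ℕ)} :
    p ∈ bot n k ↔ ∃ x, p = ({x}, fun _ => 0) := by
  simp [bot, eq_comm]

theorem isWP_bot : IsWP (bot n k) := by
  refine ⟨?_, ?_, fun x => ⟨({x}, fun _ => 0), mem_bot.mpr ⟨x, rfl⟩, Finset.mem_singleton_self x⟩,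
    ?_⟩
  · rintro p hp
    obtain ⟨x, rfl⟩ := mem_bot.mp hp
    exact Finset.singleton_nonempty x
  · rintro p hp q hq hpq
    obtain ⟨x, rfl⟩ := mem_bot.mp hp
    obtain ⟨y, rfl⟩ := mem_bot.mp hq
    exact Finset.disjoint_singleton.mpr fun hxy => hpq (hxy ▸ rfl)
  · rintro p hp
    obtain ⟨x, rfl⟩ := mem_bot.mp hp
    simp [wsum]

theorem wtot_blocksIn_bot (S : Finset (Fin n)) : wtot (blocksIn (bot n k) S) = 0 := by
  funext i
  refine Finset.sum_eq_zero fun p hp => ?_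
  obtain ⟨x, rfl⟩ := mem_bot.mp (Finset.mem_of_mem_filter p hp)
  rfl

theorem card_blocksIn_bot (S : Finset (Fin n)) : (blocksIn (bot n k) S).card = S.card := by
  rw [blocksIn, bot, Finset.filter_image, Finset.card_image_of_injective _ fun x y h => by
    simpa using congrArg Prod.fst h]
  congr 1
  ext x
  simp

theorem bot_le_iff : le (bot n k) z ↔ IsWP z := by
  refine ⟨le.isWP_right, fun hz => ⟨isWP_bot, hz, fun p hp => ?_, fun q hq => ?_⟩⟩
  · obtain ⟨x, rfl⟩ := mem_bot.mp hp
    obtain ⟨q, hq, hxq⟩ := hz.exists_mem x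
    exact ⟨q, hq, Finset.singleton_subset_iff.mpr hxq⟩
  · show IsMergeWeight q.2 (wtot (blocksIn _ q.1)) (blocksIn _ q.1).card
    rw [wtot_blocksIn_bot, card_blocksIn_bot, ← hz.wsum_add_one hq]
    exact ⟨zero_le, rfl⟩

theorem bot_le_and_le_iff {ρ : WP n k} : le (bot n k) z ∧ le z ρ ↔ le z ρ :=
  ⟨And.right, fun h => ⟨bot_le_iff.mpr h.isWP_left, h⟩⟩

theorem isWP_top (hn : 0 < n) {ν : Fin k → ℕ} (hν : wsum ν + 1 = n) : IsWP (top n k ν) := by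
  refine ⟨?_, ?_, fun x => ⟨_, Finset.mem_singleton_self _, Finset.mem_univ x⟩, ?_⟩ <;>
    simp only [top, Finset.mem_singleton]
  · rintro p rfl
    exact Finset.univ_nonempty_iff.mpr ⟨⟨0, hn⟩⟩
  · rintro p rfl q rfl h
    exact absurd rfl h
  · rintro p rfl
    simpa using hν

theorem le_top_iff {ν : Fin k → ℕ} :
    le z (top n k ν) ↔ IsWP z ∧ IsWP (top n k ν) ∧ IsMergeWeight ν (wtot z) z.card := by
  simp only [le_iff, Refines, IsMergeBlock, top, Finset.mem_singleton, forall_eq, blocksIn_univ,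
    exists_eq_left, Finset.subset_univ, implies_true, true_and]

end BotTop

noncomputable section Contraction

variable {α β β' : WP n k} {S T : Finset (Fin n)} {q q' : Finset (Fin n) × (Fin k → ℕ)}

variable (α) in
def unionBlocks (c : Finset (Fin α.card)) : Finset (Fin n) := (c.map α.embOfFin).biUnion Prod.fst

variable (α) in
def indicesIn (S : Finset (Fin n)) : Finset (Fin α.card) :=
  Finset.univ.filter fun j => (α.embOfFin j).1 ⊆ S

theorem mem_unionBlocks {c : Finset (Fin α.card)} {x : Fin n} :
    x ∈ unionBlocks α c ↔ ∃ j ∈ c, x ∈ (α.embOfFin j).1 := by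
  simp [unionBlocks]

theorem mem_indicesIn {j : Fin α.card} : j ∈ indicesIn α S ↔ (α.embOfFin j).1 ⊆ S := by
  simp [indicesIn]

theorem map_indicesIn (S : Finset (Fin n)) : (indicesIn α S).map α.embOfFin = blocksIn α S := by
  rw [blocksIn]
  conv_rhs => rw [← α.map_embOfFin_univ, Finset.filter_map]
  rfl

theorem card_indicesIn (S : Finset (Fin n)) : (indicesIn α S).card = (blocksIn α S).card := by
  rw [← map_indicesIn, Finset.card_map]

theorem unionBlocks_indicesIn_subset (S : Finset (Fin n)) : unionBlocks α (indicesIn α S) ⊆ S := by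
  intro x hx
  obtain ⟨j, hj, hxj⟩ := mem_unionBlocks.mp hx
  exact mem_indicesIn.mp hj hxj

theorem unionBlocks_indicesIn (h : le α β) (hq : q ∈ β) :
    unionBlocks α (indicesIn α q.1) = q.1 := by
  refine (unionBlocks_indicesIn_subset _).antisymm fun x hx => ?_
  obtain ⟨p, hp, hxp⟩ := h.isWP_left.exists_mem x
  obtain ⟨j, rfl⟩ := Finset.exists_embOfFin_eq hp
  exact mem_unionBlocks.mpr
    ⟨j, mem_indicesIn.mpr (h.refines.subset_of_mem h.isWP_right hp hq hxp hx), hxp⟩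

theorem indicesIn_unionBlocks (hα : IsWP α) (c : Finset (Fin α.card)) :
    indicesIn α (unionBlocks α c) = c := by
  ext j
  refine ⟨fun hj => ?_, fun hj => mem_indicesIn.mpr fun x hx => mem_unionBlocks.mpr ⟨j, hj, hx⟩⟩
  obtain ⟨x, hx⟩ := hα.nonempty (α.embOfFin_mem j)
  obtain ⟨i, hi, hxi⟩ := mem_unionBlocks.mp (mem_indicesIn.mp hj hx)
  rwa [α.embOfFin.injective (hα.eq_of_mem_of_mem (α.embOfFin_mem j) (α.embOfFin_mem i) hx hxi)]

theorem blocksIn_unionBlocks (hα : IsWP α) (c : Finset (Fin α.card)) :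
    blocksIn α (unionBlocks α c) = c.map α.embOfFin := by
  rw [← map_indicesIn, indicesIn_unionBlocks hα]

theorem indicesIn_subset_indicesIn_iff (hS : unionBlocks α (indicesIn α S) = S) :
    indicesIn α S ⊆ indicesIn α T ↔ S ⊆ T := by
  refine ⟨fun h => ?_, fun h j hj => mem_indicesIn.mpr ((mem_indicesIn.mp hj).trans h)⟩
  rw [← hS]
  exact (Finset.biUnion_subset_biUnion_of_subset_left _ (Finset.map_subset_map.mpr h)).trans
    (unionBlocks_indicesIn_subset T)

theorem disjoint_indicesIn (hα : IsWP α) (hST : Disjoint S T) :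
    Disjoint (indicesIn α S) (indicesIn α T) := by
  refine Finset.disjoint_left.mpr fun j hjS hjT => ?_
  obtain ⟨x, hx⟩ := hα.nonempty (α.embOfFin_mem j)
  exact Finset.disjoint_left.mp hST (mem_indicesIn.mp hjS hx) (mem_indicesIn.mp hjT hx)

theorem disjoint_unionBlocks (hα : IsWP α) {c c' : Finset (Fin α.card)} (hcc' : Disjoint c c') :
    Disjoint (unionBlocks α c) (unionBlocks α c') := by
  refine Finset.disjoint_left.mpr fun x hx hx' => ?_
  obtain ⟨j, hj, hxj⟩ := mem_unionBlocks.mp hx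
  obtain ⟨i, hi, hxi⟩ := mem_unionBlocks.mp hx'
  rw [α.embOfFin.injective (hα.eq_of_mem_of_mem (α.embOfFin_mem j) (α.embOfFin_mem i) hxj hxi)]
    at hj
  exact Finset.disjoint_left.mp hcc' hj hi

variable (α) in
def contractBlock (q : Finset (Fin n) × (Fin k → ℕ)) : Finset (Fin α.card) × (Fin k → ℕ) :=
  (indicesIn α q.1, q.2 - wtot (blocksIn α q.1))

variable (α) in
def expandBlock (c : Finset (Fin α.card) × (Fin k → ℕ)) : Finset (Fin n) × (Fin k → ℕ) :=
  (unionBlocks α c.1, c.2 + wtot (blocksIn α (unionBlocks α c.1)))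

variable (α) in
def contract (β : WP n k) : WP α.card k := β.image (contractBlock α)

variable (α) in
def expand (γ : WP α.card k) : WP n k := γ.image (expandBlock α)

theorem expandBlock_contractBlock (h : le α β) (hq : q ∈ β) :
    expandBlock α (contractBlock α q) = q := by
  have hsat := unionBlocks_indicesIn h hq
  refine Prod.ext hsat ?_
  simp only [expandBlock, contractBlock, hsat]
  exact tsub_add_cancel_of_le (h.isMergeBlock hq).1

theorem contractBlock_expandBlock (hα : IsWP α) (c : Finset (Fin α.card) × (Fin k → ℕ)) :
    contractBlock α (expandBlock α c) = c :=
  Prod.ext (indicesIn_unionBlocks hα c.1) (add_tsub_cancel_right _ _)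

theorem expand_contract (h : le α β) : expand α (contract α β) = β := by
  rw [expand, contract, Finset.image_image]
  exact (Finset.image_congr fun q hq => expandBlock_contractBlock h hq).trans Finset.image_id

theorem contract_expand (hα : IsWP α) (γ : WP α.card k) : contract α (expand α γ) = γ := by
  rw [expand, contract, Finset.image_image]
  exact (Finset.image_congr fun c _ => contractBlock_expandBlock hα c).trans Finset.image_id

theorem contractBlock_injOn (h : le α β) : Set.InjOn (contractBlock α) β := by
  intro q hq q' hq' hqq'
  rw [← expandBlock_contractBlock h hq, hqq', expandBlock_contractBlock h hq']

theorem isWP_contract (h : le α β) : IsWP (contract α β) := by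
  simp only [IsWP, contract, Finset.forall_mem_image, Finset.exists_mem_image]
  refine ⟨fun q hq => ?_, fun q hq q' hq' hqq' => ?_, fun j => ?_, fun q hq => ?_⟩
  · rw [contractBlock, ← Finset.card_pos, card_indicesIn, Finset.card_pos]
    exact blocksIn_nonempty_of_le h hq
  · exact disjoint_indicesIn h.isWP_left
      (h.isWP_right.disjoint hq hq' fun hqq => hqq' (congrArg _ hqq))
  · obtain ⟨q, hq, hjq⟩ := h.refines _ (α.embOfFin_mem j)
    exact ⟨q, hq, mem_indicesIn.mpr hjq⟩
  · have hpos := Finset.card_pos.mpr (blocksIn_nonempty_of_le h hq)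
    rw [contractBlock, card_indicesIn, (h.isMergeBlock hq).2]
    omega

theorem isWP_expand (hα : IsWP α) {γ : WP α.card k} (hγ : IsWP γ) : IsWP (expand α γ) := by
  simp only [IsWP, expand, Finset.forall_mem_image, Finset.exists_mem_image]
  refine ⟨fun c hc => ?_, fun c hc c' hc' hcc' => ?_, fun x => ?_, fun c hc => ?_⟩
  · obtain ⟨j, hj⟩ := hγ.nonempty hc
    obtain ⟨x, hx⟩ := hα.nonempty (α.embOfFin_mem j)
    exact ⟨x, mem_unionBlocks.mpr ⟨j, hj, hx⟩⟩
  · exact disjoint_unionBlocks hα (hγ.disjoint hc hc' fun hcc => hcc' (congrArg _ hcc))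
  · obtain ⟨p, hp, hxp⟩ := hα.exists_mem x
    obtain ⟨j, rfl⟩ := Finset.exists_embOfFin_eq hp
    obtain ⟨c, hc, hjc⟩ := hγ.exists_mem j
    exact ⟨c, hc, mem_unionBlocks.mpr ⟨j, hjc, hxp⟩⟩
  · rw [expandBlock, blocksIn_unionBlocks hα, wsum_add, unionBlocks,
      card_biUnion_fst hα (α.map_embOfFin_subset c.1), Finset.card_map, ← hγ.wsum_add_one hc]
    ring

theorem le_expand (hα : IsWP α) {γ : WP α.card k} (hγ : IsWP γ) : le α (expand α γ) := by
  refine le_iff.mpr ⟨hα, isWP_expand hα hγ, fun p hp => ?_, ?_⟩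
  · obtain ⟨j, rfl⟩ := Finset.exists_embOfFin_eq hp
    obtain ⟨c, hc, hjc⟩ := hγ.exists_mem j
    exact ⟨expandBlock α c, Finset.mem_image_of_mem _ hc,
      fun x hx => mem_unionBlocks.mpr ⟨j, hjc, hx⟩⟩
  · simp only [expand, Finset.forall_mem_image]
    intro c hc
    refine ⟨le_add_self, ?_⟩
    rw [expandBlock, add_tsub_cancel_right, blocksIn_unionBlocks hα, Finset.card_map,
      ← hγ.wsum_add_one hc, Nat.add_sub_cancel]

theorem contract_top (ν : Fin k → ℕ) :
    contract α (top n k ν) = top α.card k (ν - wtot α) := by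
  have hindices : indicesIn α Finset.univ = Finset.univ :=
    Finset.filter_true_of_mem fun j _ => Finset.subset_univ _
  simp [contract, top, contractBlock, hindices, blocksIn_univ]

theorem blocksIn_eq_biUnion (h : le α β) (href : Refines β β') (hβ' : IsWP β') (hq' : q' ∈ β') :
    blocksIn α q'.1 = (blocksIn β q'.1).biUnion fun q => blocksIn α q.1 := by
  ext p
  simp only [blocksIn, Finset.mem_biUnion, Finset.mem_filter]
  constructor
  · rintro ⟨hp, hpq'⟩
    obtain ⟨q, hq, hpq⟩ := h.refines p hp
    obtain ⟨x, hx⟩ := h.isWP_left.nonempty hp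
    exact ⟨q, ⟨hq, href.subset_of_mem hβ' hq hq' (hpq hx) (hpq' hx)⟩, hp, hpq⟩
  · rintro ⟨q, ⟨-, hqq'⟩, hp, hpq⟩
    exact ⟨hp, hpq.trans hqq'⟩

theorem wtot_blocksIn_eq_sum (h : le α β) (href : Refines β β') (hβ' : IsWP β') (hq' : q' ∈ β') :
    wtot (blocksIn α q'.1) = ∑ q ∈ blocksIn β q'.1, wtot (blocksIn α q.1) := by
  rw [wtot_eq_sum, blocksIn_eq_biUnion h href hβ' hq', Finset.sum_biUnion]
  · simp only [wtot_eq_sum]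
  · intro q hq q'' hq'' hqq''
    refine Finset.disjoint_left.mpr fun p hpq hpq'' => hqq'' ?_
    obtain ⟨x, hx⟩ := h.isWP_left.nonempty (Finset.mem_of_mem_filter p hpq)
    exact h.isWP_right.eq_of_mem_of_mem (Finset.mem_of_mem_filter q hq)
      (Finset.mem_of_mem_filter q'' hq'') ((Finset.mem_filter.mp hpq).2 hx)
      ((Finset.mem_filter.mp hpq'').2 hx)

theorem blocksIn_contract (h : le α β) (S : Finset (Fin n)) :
    blocksIn (contract α β) (indicesIn α S) = (blocksIn β S).image (contractBlock α) := by
  rw [blocksIn, contract, Finset.filter_image]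
  exact congrArg _ (Finset.filter_congr fun q hq =>
    indicesIn_subset_indicesIn_iff (unionBlocks_indicesIn h hq))

theorem isMergeBlock_contract_iff (h : le α β) (h' : le α β') (href : Refines β β')
    (hq' : q' ∈ β') : IsMergeBlock (contract α β) (contractBlock α q') ↔ IsMergeBlock β q' := by
  have hinj : Set.InjOn (contractBlock α) (blocksIn β q'.1) :=
    (contractBlock_injOn h).mono (Finset.filter_subset _ _)
  have hfit : ∀ q ∈ blocksIn β q'.1, wtot (blocksIn α q.1) ≤ q.2 :=
    fun q hq => (h.isMergeBlock (Finset.mem_of_mem_filter q hq)).1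
  have hpart := wtot_blocksIn_eq_sum h href h'.isWP_right hq'
  have hwtot : wtot (blocksIn (contract α β) (indicesIn α q'.1))
      = wtot (blocksIn β q'.1) - wtot (blocksIn α q'.1) := by
    rw [blocksIn_contract h, wtot_eq_sum, Finset.sum_image hinj, hpart, wtot_eq_sum]
    exact Finset.sum_tsub_distrib _ hfit
  have hle : wtot (blocksIn α q'.1) ≤ wtot (blocksIn β q'.1) := by
    rw [hpart, wtot_eq_sum]
    exact Finset.sum_le_sum hfit
  unfold IsMergeBlock
  rw [contractBlock, hwtot, blocksIn_contract h, Finset.card_image_of_injOn hinj]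
  exact isMergeWeight_tsub_iff (h'.isMergeBlock hq').1 hle

theorem refines_contract_iff (h : le α β) :
    Refines (contract α β) (contract α β') ↔ Refines β β' := by
  simp only [Refines, contract, Finset.forall_mem_image, Finset.exists_mem_image]
  exact forall₂_congr fun q hq => exists_congr fun q' => and_congr_right fun _ =>
    indicesIn_subset_indicesIn_iff (unionBlocks_indicesIn h hq)

theorem contract_le_contract_iff (h : le α β) (h' : le α β') :
    le (contract α β) (contract α β') ↔ le β β' := by
  simp only [le_iff, refines_contract_iff h, isWP_contract h, isWP_contract h', h.isWP_right,
    h'.isWP_right, true_and]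
  refine and_congr_right fun href => ?_
  simp only [contract, Finset.forall_mem_image]
  exact forall₂_congr fun q' hq' => isMergeBlock_contract_iff h h' href hq'

def contractEquiv (hα : IsWP α) : {β // le α β} ≃ {γ : WP α.card k // IsWP γ} where
  toFun β := ⟨contract α β, isWP_contract β.2⟩
  invFun γ := ⟨expand α γ, le_expand hα γ.2⟩
  left_inv β := Subtype.ext (expand_contract β.2)
  right_inv γ := Subtype.ext (contract_expand hα γ)

end Contraction

noncomputable section Restriction

variable {α z z' : WP n k} {B : Finset (Fin n)} {p q : Finset (Fin n) × (Fin k → ℕ)}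

variable (B) in
def pushBlock : Finset (Fin B.card) × (Fin k → ℕ) ↪ Finset (Fin n) × (Fin k → ℕ) :=
  (Finset.mapEmbedding B.embOfFin).toEmbedding.prodMap (Function.Embedding.refl _)

theorem pushBlock_apply (c : Finset (Fin B.card) × (Fin k → ℕ)) :
    pushBlock B c = (c.1.map B.embOfFin, c.2) :=
  rfl

theorem pushBlock_subset (c : Finset (Fin B.card) × (Fin k → ℕ)) : (pushBlock B c).1 ⊆ B :=
  B.map_embOfFin_subset c.1

theorem exists_pushBlock_eq (hq : q.1 ⊆ B) : ∃ c, pushBlock B c = q := by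
  refine ⟨(Finset.univ.filter fun j => B.embOfFin j ∈ q.1, q.2), Prod.ext ?_ rfl⟩
  change (Finset.univ.filter ((· ∈ q.1) ∘ B.embOfFin)).map B.embOfFin = q.1
  rw [← Finset.filter_map, B.map_embOfFin_univ, Finset.filter_mem_eq_inter,
    Finset.inter_eq_right.mpr hq]

theorem wtot_map_pushBlock (t : WP B.card k) : wtot (t.map (pushBlock B)) = wtot t := by
  rw [wtot_eq_sum, wtot_eq_sum, Finset.sum_map]
  rfl

variable (B) in
def restrict (z : WP n k) : WP B.card k :=
  z.preimage (pushBlock B) (pushBlock B).injective.injOn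

theorem mem_restrict {c : Finset (Fin B.card) × (Fin k → ℕ)} :
    c ∈ restrict B z ↔ pushBlock B c ∈ z :=
  Finset.mem_preimage

theorem map_blocksIn_restrict (c : Finset (Fin B.card)) :
    (blocksIn (restrict B z) c).map (pushBlock B) = blocksIn z (c.map B.embOfFin) := by
  ext q
  simp only [blocksIn, Finset.mem_map, Finset.mem_filter, mem_restrict]
  constructor
  · rintro ⟨d, ⟨hd, hdc⟩, rfl⟩
    exact ⟨hd, Finset.map_subset_map.mpr hdc⟩
  · rintro ⟨hq, hqc⟩
    obtain ⟨d, rfl⟩ := exists_pushBlock_eq (hqc.trans (B.map_embOfFin_subset c))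
    exact ⟨d, ⟨hq, Finset.map_subset_map.mp hqc⟩, rfl⟩

theorem map_restrict (z : WP n k) : (restrict B z).map (pushBlock B) = blocksIn z B := by
  simpa [blocksIn_univ, B.map_embOfFin_univ] using
    map_blocksIn_restrict (B := B) (z := z) Finset.univ

theorem isMergeBlock_restrict_iff (c : Finset (Fin B.card) × (Fin k → ℕ)) :
    IsMergeBlock (restrict B z) c ↔ IsMergeBlock z (pushBlock B c) := by
  unfold IsMergeBlock
  rw [pushBlock_apply, ← map_blocksIn_restrict, wtot_map_pushBlock, Finset.card_map]

theorem isMergeBlock_iff_restrict (q : Finset (Fin n) × (Fin k → ℕ)) :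
    IsMergeBlock z q ↔ IsMergeWeight q.2 (wtot (restrict q.1 z)) (restrict q.1 z).card := by
  unfold IsMergeBlock
  rw [← map_restrict, wtot_map_pushBlock, Finset.card_map]

theorem isWP_restrict (h : le z α) (hp : p ∈ α) : IsWP (restrict p.1 z) := by
  simp only [IsWP, mem_restrict]
  refine ⟨fun c hc => ?_, fun c hc c' hc' hcc' => ?_, fun j => ?_, fun c hc => ?_⟩
  · exact Finset.map_nonempty.mp (h.isWP_left.nonempty hc)
  · exact (Finset.disjoint_map _).mp (h.isWP_left.disjoint hc hc' ((pushBlock _).injective.ne hcc'))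
  · obtain ⟨q, hq, hjq⟩ := h.isWP_left.exists_mem (p.1.embOfFin j)
    obtain ⟨c, rfl⟩ := exists_pushBlock_eq
      (h.refines.subset_of_mem h.isWP_right hq hp hjq (p.1.embOfFin_mem j))
    exact ⟨c, hq, (Finset.mem_map' _).mp hjq⟩
  · rw [← Finset.card_map p.1.embOfFin]
    exact h.isWP_left.wsum_add_one hc

theorem isWP_top_of_mem (hα : IsWP α) (hp : p ∈ α) : IsWP (top p.1.card k p.2) :=
  isWP_top (Finset.card_pos.mpr (hα.nonempty hp)) (by simpa using hα.wsum_add_one hp)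

theorem restrict_le_top (h : le z α) (hp : p ∈ α) : le (restrict p.1 z) (top p.1.card k p.2) :=
  le_top_iff.mpr ⟨isWP_restrict h hp, isWP_top_of_mem h.isWP_right hp,
    (isMergeBlock_iff_restrict p).mp (h.isMergeBlock hp)⟩

theorem le_iff_forall_restrict_le (h : le z α) (h' : le z' α) :
    le z z' ↔ ∀ p ∈ α, le (restrict p.1 z) (restrict p.1 z') := by
  constructor
  · intro hzz' p hp
    refine le_iff.mpr ⟨isWP_restrict h hp, isWP_restrict h' hp, fun c hc => ?_, fun c' hc' =>
      (isMergeBlock_restrict_iff c').mpr (hzz'.isMergeBlock (mem_restrict.mp hc'))⟩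
    obtain ⟨q', hq', hcq'⟩ := hzz'.refines _ (mem_restrict.mp hc)
    obtain ⟨x, hx⟩ := h.isWP_left.nonempty (mem_restrict.mp hc)
    obtain ⟨c', rfl⟩ := exists_pushBlock_eq
      (h'.refines.subset_of_mem h'.isWP_right hq' hp (hcq' hx) (pushBlock_subset c hx))
    exact ⟨c', mem_restrict.mpr hq', Finset.map_subset_map.mp hcq'⟩
  · intro hres
    refine le_iff.mpr ⟨h.isWP_left, h'.isWP_left, fun q hq => ?_, fun q' hq' => ?_⟩
    · obtain ⟨p, hp, hqp⟩ := h.refines q hq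
      obtain ⟨c, rfl⟩ := exists_pushBlock_eq hqp
      obtain ⟨c', hc', hcc'⟩ := (hres p hp).refines c (mem_restrict.mpr hq)
      exact ⟨_, mem_restrict.mp hc', Finset.map_subset_map.mpr hcc'⟩
    · obtain ⟨p, hp, hq'p⟩ := h'.refines q' hq'
      obtain ⟨c', rfl⟩ := exists_pushBlock_eq hq'p
      exact (isMergeBlock_restrict_iff c').mp ((hres p hp).isMergeBlock (mem_restrict.mpr hq'))

variable (α) in
def glue (g : ∀ p : α, WP p.1.1.card k) : WP n k :=
  α.attach.biUnion fun p => (g p).map (pushBlock p.1.1)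

variable {g : ∀ p : α, WP p.1.1.card k}

theorem mem_glue : q ∈ glue α g ↔ ∃ p : α, ∃ c ∈ g p, pushBlock p.1.1 c = q := by
  simp [glue]

theorem restrict_glue (hα : IsWP α) (hg : ∀ p, IsWP (g p)) (p : α) :
    restrict p.1.1 (glue α g) = g p := by
  ext c
  rw [mem_restrict, mem_glue]
  refine ⟨fun ⟨p', c', hc', hcc'⟩ => ?_, fun hc => ⟨p, c, hc, rfl⟩⟩
  obtain ⟨x, hx⟩ := Finset.map_nonempty.mpr ((hg p').nonempty hc')
  have hpp' : p' = p := Subtype.ext (hα.eq_of_mem_of_mem p'.2 p.2 (pushBlock_subset c' hx)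
    (pushBlock_subset c (hcc' ▸ hx)))
  subst hpp'
  rwa [← (pushBlock _).injective hcc']

theorem glue_restrict (h : le z α) : glue α (fun p => restrict p.1.1 z) = z := by
  ext q
  simp only [mem_glue, mem_restrict]
  refine ⟨fun ⟨p, c, hc, hcq⟩ => hcq ▸ hc, fun hq => ?_⟩
  obtain ⟨p, hp, hqp⟩ := h.refines q hq
  obtain ⟨c, rfl⟩ := exists_pushBlock_eq hqp
  exact ⟨⟨p, hp⟩, c, hq, rfl⟩

theorem isWP_glue (hα : IsWP α) (hg : ∀ p, IsWP (g p)) : IsWP (glue α g) := by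
  simp only [IsWP, mem_glue, forall_exists_index, and_imp]
  refine ⟨?_, ?_, fun x => ?_, ?_⟩
  · rintro _ p c hc rfl
    exact Finset.map_nonempty.mpr ((hg p).nonempty hc)
  · rintro _ p c hc rfl _ p' c' hc' rfl hcc'
    refine Finset.disjoint_left.mpr fun x hx hx' => ?_
    have hpp' : p = p' := Subtype.ext (hα.eq_of_mem_of_mem p.2 p'.2 (pushBlock_subset c hx)
      (pushBlock_subset c' hx'))
    subst hpp'
    exact Finset.disjoint_left.mp ((Finset.disjoint_map _).mpr
      ((hg p).disjoint hc hc' fun h => hcc' (h ▸ rfl))) hx hx'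
  · obtain ⟨p, hp, hxp⟩ := hα.exists_mem x
    obtain ⟨j, rfl⟩ := Finset.exists_embOfFin_eq hxp
    obtain ⟨c, hc, hjc⟩ := (hg ⟨p, hp⟩).exists_mem j
    exact ⟨_, ⟨⟨p, hp⟩, c, hc, rfl⟩, Finset.mem_map_of_mem _ hjc⟩
  · rintro _ p c hc rfl
    rw [pushBlock_apply, Finset.card_map]
    exact (hg p).wsum_add_one hc

theorem glue_le (hα : IsWP α) (hg : ∀ p : α, le (g p) (top p.1.1.card k p.1.2)) :
    le (glue α g) α := by
  have hgWP : ∀ p, IsWP (g p) := fun p => (hg p).isWP_left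
  refine le_iff.mpr ⟨isWP_glue hα hgWP, hα, ?_, fun p hp => ?_⟩
  · simp only [Refines, mem_glue, forall_exists_index, and_imp]
    rintro _ p c - rfl
    exact ⟨p.1, p.2, pushBlock_subset c⟩
  · rw [isMergeBlock_iff_restrict, restrict_glue hα hgWP ⟨p, hp⟩]
    exact (le_top_iff.mp (hg ⟨p, hp⟩)).2.2

def restrictEquiv (hα : IsWP α) :
    {z // le z α} ≃ ((p : α) → {w : WP p.1.1.card k // le w (top p.1.1.card k p.1.2)}) where
  toFun z p := ⟨restrict p.1.1 z, restrict_le_top z.2 p.2⟩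
  invFun g := ⟨glue α fun p => (g p).1, glue_le hα fun p => (g p).2⟩
  left_inv z := Subtype.ext (glue_restrict z.2)
  right_inv g := funext fun p => Subtype.ext (restrict_glue hα (fun p => (g p).2.isWP_left) p)

end Restriction

theorem exists_hatEquiv {m : ℕ} {α : WP n k} (e : {β // le α β} ≃ {γ : WP m k // IsWP γ})
    (he : ∀ β β', le β.1 β'.1 ↔ le (e β).1 (e β').1) :
    ∃ e' : {z : Option (WP n k) // IsWPHat z ∧ hatLE (some α) z} ≃
        {z : Option (WP m k) // IsWPHat z},
      ∀ z z', hatLE z.1 z'.1 ↔ hatLE (e' z).1 (e' z').1 := by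
  refine ⟨⟨fun
      | ⟨none, _⟩ => ⟨none, trivial⟩
      | ⟨some β, h⟩ => ⟨some (e ⟨β, h.2⟩).1, (e ⟨β, h.2⟩).2⟩,
    fun
      | ⟨none, _⟩ => ⟨none, trivial, trivial⟩
      | ⟨some γ, h⟩ => ⟨some (e.symm ⟨γ, h⟩).1, (e.symm ⟨γ, h⟩).2.isWP_right, (e.symm ⟨γ, h⟩).2⟩,
    ?_, ?_⟩, ?_⟩
  · rintro ⟨_ | β, h⟩
    · rfl
    · simp
  · rintro ⟨_ | γ, h⟩
    · rfl
    · exact Subtype.ext (congrArg (fun γ => some γ.1) (e.apply_symm_apply ⟨γ, h⟩))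
  · rintro ⟨_ | β, h⟩ ⟨_ | β', h'⟩
    · exact Iff.rfl
    · exact Iff.rfl
    · exact Iff.rfl
    · exact he ⟨β, h.2⟩ ⟨β', h'.2⟩

end WP

theorem weighted_partition_interval_structure_general
    (n k : ℕ) (hn : 1 ≤ n) (α : WP n k) (hα : WP.IsWP α) :
    (∃ e : {z : Option (WP n k) // IsWPHat z ∧ hatLE (some α) z} ≃
           {z : Option (WP α.card k) // IsWPHat z},
        ∀ z z', hatLE z.1 z'.1 ↔ hatLE (e z).1 (e z').1) ∧
    (∀ ν : Fin k → ℕ, (∑ i, ν i) = n - 1 →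
      (∀ i, WP.wtot α i ≤ ν i) → (∑ i, (ν i - WP.wtot α i)) = α.card - 1 →
      ∃ e : {z : WP n k // WP.le α z ∧ WP.le z (WP.top n k ν)} ≃
            {z : WP α.card k // WP.le (WP.bot α.card k) z ∧
              WP.le z (WP.top α.card k (fun i => ν i - WP.wtot α i))},
        ∀ z z', WP.le z.1 z'.1 ↔ WP.le (e z).1 (e z').1) ∧
    (∃ e : {z : WP n k // WP.le (WP.bot n k) z ∧ WP.le z α} ≃
           ((p : α) → {z : WP p.1.1.card k // WP.le (WP.bot p.1.1.card k) z ∧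
              WP.le z (WP.top p.1.1.card k p.1.2)}),
        ∀ z z', WP.le z.1 z'.1 ↔ ∀ p, WP.le ((e z) p).1 ((e z') p).1) := by
  have hcontract (β β' : {β // WP.le α β}) :
      WP.le β.1 β'.1 ↔ WP.le (WP.contractEquiv hα β).1 (WP.contractEquiv hα β').1 :=
    (WP.contract_le_contract_iff β.2 β'.2).symm
  refine ⟨WP.exists_hatEquiv _ hcontract, fun ν hν hwle hsum => ?_, ?_⟩
  · have hαν : WP.le α (WP.top n k ν) :=
      WP.le_top_iff.mpr ⟨hα, WP.isWP_top hn (by rw [WP.wsum]; omega), hwle, hsum⟩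
    refine exists_relEquiv_subtype_and ((WP.contractEquiv hα).trans
      (Equiv.subtypeEquivRight fun _ => WP.bot_le_iff.symm)) hcontract fun β => ?_
    rw [← WP.contract_le_contract_iff β.2 hαν, WP.contract_top]
    rfl
  · refine ⟨(Equiv.subtypeEquivRight fun _ => WP.bot_le_and_le_iff).trans
      ((WP.restrictEquiv hα).trans (Equiv.piCongrRight fun _ =>
        Equiv.subtypeEquivRight fun _ => WP.bot_le_and_le_iff.symm)), fun z z' => ?_⟩
    exact (WP.le_iff_forall_restrict_le z.2.2 z'.2.2).trans
      ⟨fun h p => h p.1 p.2, fun h p hp => h ⟨p, hp⟩⟩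

/-- Structure of upper and lower intervals in the weighted partition poset:
for `α = {A₁^{μ₁},…,A_s^{μ_s}} ∈ Π̂_n^k` with `α ≠ 1̂` (so `α ∈ Π_n^k`, `s = α.card`):
(1) `[α, 1̂] ≅ Π̂_s^k`;
(2) for `ν ∈ wcomp_{n-1}` with `ν - μ(α) ∈ wcomp_{s-1}`,
    `[α, [n]^ν] ≅ [0̂, [s]^{ν - μ(α)}]` in `Π_s^k`;
(3) `[0̂, α] ≅ [0̂, [|A₁|]^{μ₁}] × ⋯ × [0̂, [|A_s|]^{μ_s}]`. -/
theorem weighted_partition_interval_structure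
    (n k : ℕ) (hn : 1 ≤ n) (hk : 1 ≤ k) (α : WP n k) (hα : WP.IsWP α) :
    (∃ e : {z : Option (WP n k) // IsWPHat z ∧ hatLE (some α) z} ≃
           {z : Option (WP α.card k) // IsWPHat z},
        ∀ z z', hatLE z.1 z'.1 ↔ hatLE (e z).1 (e z').1) ∧
    (∀ ν : Fin k → ℕ, (∑ i, ν i) = n - 1 →
      (∀ i, WP.wtot α i ≤ ν i) → (∑ i, (ν i - WP.wtot α i)) = α.card - 1 →
      ∃ e : {z : WP n k // WP.le α z ∧ WP.le z (WP.top n k ν)} ≃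
            {z : WP α.card k // WP.le (WP.bot α.card k) z ∧
              WP.le z (WP.top α.card k (fun i => ν i - WP.wtot α i))},
        ∀ z z', WP.le z.1 z'.1 ↔ WP.le (e z).1 (e z').1) ∧
    (∃ e : {z : WP n k // WP.le (WP.bot n k) z ∧ WP.le z α} ≃
           ((p : α) → {z : WP p.1.1.card k // WP.le (WP.bot p.1.1.card k) z ∧
              WP.le z (WP.top p.1.1.card k p.1.2)}),
        ∀ z z', WP.le z.1 z'.1 ↔ ∀ p, WP.le ((e z) p).1 ((e z') p).1) :=
  weighted_partition_interval_structure_general n k hn α hα
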